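/- Let A, Â ∈ ℝ^{d×r} with columns a₁,…,a_r and â₁,…,â_r. Assume ‖AᵀA − I_r‖₂ ≤ δ, that ‖â_j − a_j‖₂ ≤ ε for every j, and that √(1−δ) − √r·ε > 0. Then ÂᵀÂ is invertible, and with B̂ = Â(ÂᵀÂ)^{-1} whose columns are b̂₁,…,b̂_r and ĝ_j = b̂_j/‖b̂_j‖₂, one has for every j: ⟨a_j, ĝ_j⟩ ≥ √(1−δ) − (√r + 1)·ε. -/

import Mathlib

open Matrix

/-- Spectral norm (largest singular value): operator norm of the induced map
between Euclidean spaces. -/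
noncomputable def specNorm {m n : Type*} [Fintype m] [Fintype n] [DecidableEq n]
    (M : Matrix m n ℝ) : ℝ :=
  ‖LinearMap.toContinuousLinearMap (Matrix.toEuclideanLin M)‖

/-- Euclidean norm of a vector. -/
noncomputable def euclNorm {n : Type*} [Fintype n] (x : n → ℝ) : ℝ :=
  Real.sqrt (∑ i, x i ^ 2)
/-- `Bhat Ahat = Ahat (AhatᵀAhat)⁻¹`. -/
noncomputable def Bhat {d r : ℕ} (Ahat : Matrix (Fin d) (Fin r) ℝ) :
    Matrix (Fin d) (Fin r) ℝ :=
  Ahat * (Ahatᵀ * Ahat)⁻¹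

/-- The normalized `j`-th column of `Bhat Ahat`. -/
noncomputable def ghat {d r : ℕ} (Ahat : Matrix (Fin d) (Fin r) ℝ) (j : Fin r) :
    Fin d → ℝ :=
  fun k => Bhat Ahat k j / euclNorm (fun k' => Bhat Ahat k' j)

/-!
Since `AᵀA` is within `δ` of the identity, `‖A v‖ ≥ √(1 - δ) ‖v‖`; each column of `Â - A` has
norm at most `ε`, so `‖(Â - A) v‖ ≤ √r ε ‖v‖`, and hence `‖Â v‖ ≥ c ‖v‖` with
`c = √(1 - δ) - √r ε > 0`. In particular `Â` is injective and its Gram matrix `ÂᵀÂ` invertible.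
The column `b = b̂_j` satisfies `Âᵀ b = e_j`, so writing `b = Â w` gives
`‖b‖² = ⟨Âᵀ b, w⟩ = w_j ≤ ‖w‖ ≤ ‖b‖ / c`, i.e. `‖b‖ ≤ 1 / c`. Finally
`⟨a_j, b⟩ = ⟨â_j, b⟩ - ⟨â_j - a_j, b⟩ ≥ 1 - ε ‖b‖`, and dividing by `‖b‖` gives
`⟨a_j, ĝ_j⟩ ≥ 1 / ‖b‖ - ε ≥ c - ε`.
-/

section EuclNorm

variable {m n : Type*} [Fintype m] [Fintype n]

lemma euclNorm_eq_norm (x : n → ℝ) : euclNorm x = ‖WithLp.toLp 2 x‖ := by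
  simp [euclNorm, EuclideanSpace.norm_eq]

lemma euclNorm_nonneg (x : n → ℝ) : 0 ≤ euclNorm x :=
  Real.sqrt_nonneg _

lemma euclNorm_sq (x : n → ℝ) : euclNorm x ^ 2 = x ⬝ᵥ x := by
  rw [euclNorm, Real.sq_sqrt (Finset.sum_nonneg fun i _ => sq_nonneg _)]
  simp [dotProduct, sq]

lemma euclNorm_pos {x : n → ℝ} (hx : x ≠ 0) : 0 < euclNorm x := by
  rw [euclNorm_eq_norm]
  simpa using hx

lemma abs_apply_le_euclNorm (x : n → ℝ) (i : n) : |x i| ≤ euclNorm x := by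
  rw [euclNorm_eq_norm]
  exact PiLp.norm_apply_le (WithLp.toLp 2 x) i

lemma abs_dotProduct_le_euclNorm_mul (x y : n → ℝ) : |x ⬝ᵥ y| ≤ euclNorm x * euclNorm y := by
  rw [euclNorm_eq_norm, euclNorm_eq_norm, dotProduct_comm]
  exact abs_real_inner_le_norm (WithLp.toLp 2 x) (WithLp.toLp 2 y)

lemma sum_abs_le_sqrt_card_mul_euclNorm (v : n → ℝ) :
    ∑ i, |v i| ≤ √(Fintype.card n) * euclNorm v := by
  have h := abs_dotProduct_le_euclNorm_mul (fun i => |v i|) 1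
  have hv : euclNorm (fun i => |v i|) = euclNorm v := by simp [euclNorm]
  have h1 : euclNorm (1 : n → ℝ) = √(Fintype.card n) := by simp [euclNorm]
  rw [hv, h1] at h
  simpa [dotProduct, mul_comm] using (le_abs_self _).trans h

lemma euclNorm_sub_le (x y : n → ℝ) : euclNorm (x - y) ≤ euclNorm x + euclNorm y := by
  simpa only [euclNorm_eq_norm, WithLp.toLp_sub] using norm_sub_le _ _

lemma euclNorm_mulVec_le_specNorm [DecidableEq n] (M : Matrix m n ℝ) (v : n → ℝ) :
    euclNorm (M *ᵥ v) ≤ specNorm M * euclNorm v := by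
  rw [euclNorm_eq_norm, euclNorm_eq_norm]
  exact (LinearMap.toContinuousLinearMap (toEuclideanLin M)).le_opNorm (WithLp.toLp 2 v)

lemma abs_dotProduct_mulVec_le_specNorm [DecidableEq n] (M : Matrix n n ℝ) (v : n → ℝ) :
    |v ⬝ᵥ M *ᵥ v| ≤ specNorm M * euclNorm v ^ 2 :=
  calc |v ⬝ᵥ M *ᵥ v| ≤ euclNorm v * euclNorm (M *ᵥ v) := abs_dotProduct_le_euclNorm_mul _ _
    _ ≤ euclNorm v * (specNorm M * euclNorm v) :=
      mul_le_mul_of_nonneg_left (euclNorm_mulVec_le_specNorm M v) (euclNorm_nonneg v)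
    _ = specNorm M * euclNorm v ^ 2 := by ring

lemma euclNorm_mulVec_sq (A : Matrix m n ℝ) (v : n → ℝ) :
    euclNorm (A *ᵥ v) ^ 2 = v ⬝ᵥ (Aᵀ * A) *ᵥ v := by
  rw [euclNorm_sq, ← mulVec_mulVec, dotProduct_mulVec, mulVec_transpose, dotProduct_comm]

lemma euclNorm_mulVec_le_of_col_le (D : Matrix m n ℝ) {ε : ℝ}
    (hD : ∀ j, euclNorm (D.col j) ≤ ε) (v : n → ℝ) :
    euclNorm (D *ᵥ v) ≤ √(Fintype.card n) * ε * euclNorm v := by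
  cases isEmpty_or_nonempty n with
  | inl _ => simp [Subsingleton.elim v 0, euclNorm]
  | inr hn =>
    have hε : 0 ≤ ε := (euclNorm_nonneg _).trans (hD hn.some)
    rw [euclNorm_eq_norm, mulVec_eq_sum]
    calc ‖WithLp.toLp 2 (∑ j, MulOpposite.op (v j) • D.col j)‖
        = ‖∑ j, v j • WithLp.toLp 2 (D.col j)‖ := by simp [col, WithLp.toLp_sum]
      _ ≤ ∑ j, |v j| * euclNorm (D.col j) := by
        refine (norm_sum_le _ _).trans (le_of_eq ?_)
        simp [norm_smul, euclNorm_eq_norm]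
      _ ≤ ∑ j, |v j| * ε :=
        Finset.sum_le_sum fun j _ => mul_le_mul_of_nonneg_left (hD j) (abs_nonneg _)
      _ ≤ √(Fintype.card n) * euclNorm v * ε := by
        rw [← Finset.sum_mul]
        exact mul_le_mul_of_nonneg_right (sum_abs_le_sqrt_card_mul_euclNorm v) hε
      _ = √(Fintype.card n) * ε * euclNorm v := by ring

lemma mulVec_injective_of_mul_euclNorm_le {M : Matrix m n ℝ} {c : ℝ} (hc : 0 < c)
    (hM : ∀ v, c * euclNorm v ≤ euclNorm (M *ᵥ v)) : Function.Injective M.mulVec := by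
  intro v w hvw
  by_contra hne
  have hpos := mul_pos hc (euclNorm_pos (sub_ne_zero.mpr hne))
  have hle := hM (v - w)
  rw [mulVec_sub, hvw, sub_self, show euclNorm (0 : m → ℝ) = 0 by simp [euclNorm]] at hle
  linarith

end EuclNorm

section LowerBound

variable {m n : Type*} [Fintype m] [Fintype n] [DecidableEq n]

lemma sqrt_one_sub_mul_euclNorm_le_euclNorm_mulVec {A : Matrix m n ℝ} {δ : ℝ}
    (hδ : specNorm (Aᵀ * A - 1) ≤ δ) (v : n → ℝ) :
    √(1 - δ) * euclNorm v ≤ euclNorm (A *ᵥ v) := by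
  have hquad : (1 - δ) * euclNorm v ^ 2 ≤ euclNorm (A *ᵥ v) ^ 2 := by
    have hsplit : euclNorm (A *ᵥ v) ^ 2 = euclNorm v ^ 2 + v ⬝ᵥ (Aᵀ * A - 1) *ᵥ v := by
      rw [euclNorm_mulVec_sq, sub_mulVec, one_mulVec, dotProduct_sub, euclNorm_sq]
      ring
    have hdev := (abs_le.mp (abs_dotProduct_mulVec_le_specNorm (Aᵀ * A - 1) v)).1
    nlinarith [mul_le_mul_of_nonneg_right hδ (sq_nonneg (euclNorm v))]
  -- `Real.sqrt_mul'` needs no sign condition on `1 - δ`: for `δ > 1` both sides are `0`.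
  calc √(1 - δ) * euclNorm v = √((1 - δ) * euclNorm v ^ 2) := by
        rw [Real.sqrt_mul' _ (sq_nonneg _), Real.sqrt_sq (euclNorm_nonneg v)]
    _ ≤ √(euclNorm (A *ᵥ v) ^ 2) := Real.sqrt_le_sqrt hquad
    _ = euclNorm (A *ᵥ v) := Real.sqrt_sq (euclNorm_nonneg _)

lemma sub_mul_euclNorm_le_euclNorm_mulVec {A Â : Matrix m n ℝ} {δ ε : ℝ}
    (hδ : specNorm (Aᵀ * A - 1) ≤ δ) (hε : ∀ j, euclNorm (Â.col j - A.col j) ≤ ε)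
    (v : n → ℝ) :
    (√(1 - δ) - √(Fintype.card n) * ε) * euclNorm v ≤ euclNorm (Â *ᵥ v) := by
  have hA := sqrt_one_sub_mul_euclNorm_le_euclNorm_mulVec hδ v
  have hdiff := euclNorm_mulVec_le_of_col_le (Â - A) hε v
  have htri : euclNorm (A *ᵥ v) ≤ euclNorm (Â *ᵥ v) + euclNorm ((Â - A) *ᵥ v) := by
    simpa [sub_mulVec] using euclNorm_sub_le (Â *ᵥ v) ((Â - A) *ᵥ v)
  linarith

lemma isUnit_transpose_mul_self_of_injective {M : Matrix m n ℝ}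
    (hM : Function.Injective M.mulVec) : IsUnit (Mᵀ * M) := by
  simpa [conjTranspose_eq_transpose_of_trivial] using (PosDef.conjTranspose_mul_self M hM).isUnit

end LowerBound

section Bhat

variable {d r : ℕ} {Ahat : Matrix (Fin d) (Fin r) ℝ}

lemma transpose_mul_Bhat (hU : IsUnit (Ahatᵀ * Ahat)) : Ahatᵀ * Bhat Ahat = 1 := by
  rw [Bhat, ← Matrix.mul_assoc, mul_nonsing_inv _ ((isUnit_iff_isUnit_det _).mp hU)]

lemma dotProduct_col_Bhat (hU : IsUnit (Ahatᵀ * Ahat)) (j : Fin r) :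
    Ahat.col j ⬝ᵥ (Bhat Ahat).col j = 1 := by
  have h := congrFun (congrFun (transpose_mul_Bhat hU) j) j
  rw [mul_apply', one_apply_eq] at h
  exact h

lemma mul_euclNorm_col_Bhat_le_one {c : ℝ} (hc : 0 < c)
    (hAhat : ∀ v, c * euclNorm v ≤ euclNorm (Ahat *ᵥ v)) (hU : IsUnit (Ahatᵀ * Ahat))
    (j : Fin r) : c * euclNorm ((Bhat Ahat).col j) ≤ 1 := by
  set w := (Ahatᵀ * Ahat)⁻¹ *ᵥ Pi.single j 1
  set b := (Bhat Ahat).col j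
  have hb_single : b = Bhat Ahat *ᵥ Pi.single j 1 := (mulVec_single_one _ _).symm
  have hb : b = Ahat *ᵥ w := by rw [hb_single, mulVec_mulVec, Bhat]
  have hAb : Ahatᵀ *ᵥ b = Pi.single j 1 := by
    rw [hb_single, mulVec_mulVec, transpose_mul_Bhat hU, one_mulVec]
  have hbw : euclNorm b ^ 2 = w j := by
    rw [euclNorm_sq]
    nth_rw 2 [hb]
    rw [dotProduct_mulVec, ← mulVec_transpose, hAb, single_one_dotProduct]
  have hwj : w j ≤ euclNorm w := (le_abs_self _).trans (abs_apply_le_euclNorm w j)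
  have hcw : c * euclNorm w ≤ euclNorm b := hb ▸ hAhat w
  rcases (euclNorm_nonneg b).eq_or_lt with h0 | hpos
  · rw [← h0]
    linarith
  · refine le_of_mul_le_mul_right ?_ hpos
    nlinarith

end Bhat

lemma sub_le_dotProduct_div_euclNorm {n : Type*} [Fintype n] {a ahat b : n → ℝ} {c ε : ℝ}
    (hb : ahat ⬝ᵥ b = 1) (hε : euclNorm (ahat - a) ≤ ε) (hc : c * euclNorm b ≤ 1) :
    c - ε ≤ a ⬝ᵥ fun k => b k / euclNorm b := by
  have hbpos : 0 < euclNorm b := euclNorm_pos (by rintro rfl; simp at hb)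
  have hab : 1 - ε * euclNorm b ≤ a ⬝ᵥ b := by
    have h := (le_abs_self _).trans (abs_dotProduct_le_euclNorm_mul (ahat - a) b)
    rw [sub_dotProduct, hb] at h
    nlinarith [mul_le_mul_of_nonneg_right hε hbpos.le]
  have hdiv : (a ⬝ᵥ fun k => b k / euclNorm b) = a ⬝ᵥ b / euclNorm b := by
    simp only [dotProduct, Finset.sum_div, mul_div_assoc]
  rw [hdiv, le_div_iff₀ hbpos]
  linarith

theorem stmt_7 {d r : ℕ} {δ ε : ℝ}
    (A Ahat : Matrix (Fin d) (Fin r) ℝ)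
    (hδ : specNorm (Aᵀ * A - 1) ≤ δ)
    (hε : ∀ j, euclNorm (fun i => Ahat i j - A i j) ≤ ε)
    (hpos : 0 < Real.sqrt (1 - δ) - Real.sqrt (r : ℝ) * ε) :
    IsUnit (Ahatᵀ * Ahat) ∧
      ∀ j, Real.sqrt (1 - δ) - (Real.sqrt (r : ℝ) + 1) * ε
        ≤ (fun i => A i j) ⬝ᵥ ghat Ahat j := by
  have hAhat : ∀ v, (√(1 - δ) - √(r : ℝ) * ε) * euclNorm v ≤ euclNorm (Ahat *ᵥ v) := by
    simpa using sub_mul_euclNorm_le_euclNorm_mulVec hδ hε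
  have hU :=
    isUnit_transpose_mul_self_of_injective (mulVec_injective_of_mul_euclNorm_le hpos hAhat)
  refine ⟨hU, fun j => ?_⟩
  calc √(1 - δ) - (√(r : ℝ) + 1) * ε = (√(1 - δ) - √(r : ℝ) * ε) - ε := by ring
    _ ≤ A.col j ⬝ᵥ ghat Ahat j :=
      sub_le_dotProduct_div_euclNorm (dotProduct_col_Bhat hU j) (hε j)
        (mul_euclNorm_col_Bhat_le_one hpos hAhat hU j)
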